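/- arXiv:1904.00751 — 3 statements merged into one kernel-verified Lean document; each statement's English description precedes it below -/
import Mathlib

section
/- With the same hypotheses (∫_Q exp(|log(h/a)|) dμ ≤ 2 μ(Q) where a = exp of the μ-average of log h over Q), one also has ∫_Q (1/h) dμ ≤ 3 μ(Q)/a, and consequently the A2-type bound ((1/μ(Q)) ∫_Q h dμ) · ((1/μ(Q)) ∫_Q h^{-1} dμ) ≤ 9. -/
open MeasureTheory Set

theorem inv_integral_le_and_A2_bound {α : Type*} [MeasurableSpace α]
    (μ : Measure α) [IsFiniteMeasure μ]
    (hμ : 0 < (μ Set.univ).toReal)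
    (h : α → ℝ) (hpos : ∀ x, 0 < h x)
    (hint : Integrable h μ)
    (hinv : Integrable (fun x => (h x)⁻¹) μ)
    (hlog : Integrable (fun x => Real.log (h x)) μ)
    (a : ℝ)
    (ha : a = Real.exp ((μ Set.univ).toReal⁻¹ * ∫ x, Real.log (h x) ∂μ))
    (hJN : ∫ x, Real.exp |Real.log (h x / a)| ∂μ ≤ 2 * (μ Set.univ).toReal) :
    (∫ x, (h x)⁻¹ ∂μ ≤ 3 * (μ Set.univ).toReal / a) ∧
    ((μ Set.univ).toReal⁻¹ * ∫ x, h x ∂μ) *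
      ((μ Set.univ).toReal⁻¹ * ∫ x, (h x)⁻¹ ∂μ) ≤ 9 := by
  have ha0 : 0 < a := ha ▸ Real.exp_pos _
  set g : α → ℝ := fun x => Real.exp |Real.log (h x / a)| with hg
  -- pointwise bounds
  have hb1 : ∀ x, h x / a ≤ g x := by
    intro x
    have ht : 0 < h x / a := div_pos (hpos x) ha0
    calc h x / a = Real.exp (Real.log (h x / a)) := (Real.exp_log ht).symm
      _ ≤ g x := Real.exp_le_exp.2 (le_abs_self _)
  have hb2 : ∀ x, a / h x ≤ g x := by
    intro x
    have ht : 0 < h x / a := div_pos (hpos x) ha0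
    calc a / h x = Real.exp (Real.log (a / h x)) :=
          (Real.exp_log (div_pos ha0 (hpos x))).symm
      _ = Real.exp (-Real.log (h x / a)) := by
          rw [← Real.log_inv, inv_div]
      _ ≤ g x := Real.exp_le_exp.2 (neg_le_abs _)
  have hgnn : ∀ x, 0 ≤ g x := fun x => (Real.exp_pos _).le
  -- integrability of g
  have hmeas : AEStronglyMeasurable g μ := by
    have h1 : AEMeasurable (fun x => h x / a) μ := hint.aemeasurable.div_const a
    have h2 : AEMeasurable (fun x => Real.log (h x / a)) μ :=
      Real.measurable_log.comp_aemeasurable h1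
    exact ((Real.measurable_exp.comp measurable_abs).comp_aemeasurable h2).aestronglyMeasurable
  have hbound : Integrable (fun x => h x / a + a * (h x)⁻¹) μ :=
    (hint.div_const a).add (hinv.const_mul a)
  have hgint : Integrable g μ := by
    refine hbound.mono' hmeas (Filter.Eventually.of_forall fun x => ?_)
    rw [Real.norm_eq_abs, abs_of_nonneg (hgnn x)]
    have ht : 0 < h x / a := div_pos (hpos x) ha0
    have := (hpos x)
    have habs : |Real.log (h x / a)| = Real.log (h x / a) ∨
        |Real.log (h x / a)| = -Real.log (h x / a) := abs_choice _
    rcases habs with hc | hc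
    · have : g x = h x / a := by
        simp only [hg, hc, Real.exp_log ht]
      rw [this]
      have : 0 ≤ a * (h x)⁻¹ := le_of_lt (mul_pos ha0 (inv_pos.2 (hpos x)))
      linarith
    · have : g x = a / h x := by
        simp only [hg, hc, Real.exp_neg, Real.exp_log ht, inv_div]
      rw [this, div_eq_mul_inv a]
      have : 0 ≤ h x / a := ht.le
      linarith
  -- integral inequalities
  have hI1 : ∫ x, h x / a ∂μ ≤ 2 * (μ Set.univ).toReal := by
    refine le_trans (integral_mono (hint.div_const a) hgint hb1) hJN
  have hI2 : ∫ x, a * (h x)⁻¹ ∂μ ≤ 2 * (μ Set.univ).toReal := by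
    refine le_trans (integral_mono (hinv.const_mul a) hgint fun x => ?_) hJN
    rw [← div_eq_mul_inv]; exact hb2 x
  rw [integral_div] at hI1
  rw [integral_const_mul] at hI2
  set M := (μ Set.univ).toReal
  set I := ∫ x, h x ∂μ
  set J := ∫ x, (h x)⁻¹ ∂μ
  have hInn : 0 ≤ I := integral_nonneg fun x => (hpos x).le
  have hJnn : 0 ≤ J := integral_nonneg fun x => (inv_pos.2 (hpos x)).le
  have hIle : I ≤ 2 * a * M := by
    have := (div_le_iff₀ ha0).mp hI1
    linarith
  constructor
  · rw [le_div_iff₀ ha0]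
    nlinarith
  · have hM : 0 < M := hμ
    rw [inv_mul_eq_div, inv_mul_eq_div, div_mul_div_comm, div_le_iff₀ (by positivity)]
    nlinarith [mul_le_mul hIle hI2 (by positivity) (by positivity), sq_nonneg M]
end

section
/- Let μ, ν be mutually absolutely continuous finite measures and suppose log(dν/dμ) ∈ BMO(μ) with the property that dμ/dν ∈ B_{p'}(ν) (reverse Hölder with exponent p' > 1 with respect to ν) and the John–Nirenberg inequality gives ((1/ν(B)) ∫_B |log(dμ/dν) - c_B|^p dν)^{1/p} ≤ C ‖log(dμ/dν)‖_{BMO(ν),CB} for c_B the ν-average over B. Then (1/μ(B)) ∫_B |log(dν/dμ) + c_B| dμ ≤ C' ‖log(dμ/dν)‖_{BMO(ν), Cr(B)} for every ball B. -/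
/-!
Write `dμ = w dν`. The `μ`-average over `B` of `|log w - c_B|` is
`∫_B |log w - c_B| w dν / ∫_B w dν`. Hölder's inequality with exponents `p, p'`, taken in
`ν`-averages, bounds the numerator by `ν(B)` times the `L^p`-average of `|log w - c_B|`, which is
at most `C N` by the John–Nirenberg bound, times the `L^{p'}`-average of `w`, which the reverse
Hölder inequality bounds by `C` times the `ν`-average of `w`. The latter cancels the denominator,
so `C' = C²` works.
-/

open MeasureTheory Set

namespace MeasureTheory

variable {α : Type*} [MeasurableSpace α] {μ : Measure α}

theorem memLp_ofReal_of_integrable_rpow {f : α → ℝ} {p : ℝ} (hp : 0 < p) (hf_nonneg : 0 ≤ᵐ[μ] f)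
    (hf : AEStronglyMeasurable f μ) (hint : Integrable (fun x => f x ^ p) μ) :
    MemLp f (ENNReal.ofReal p) μ := by
  rw [← integrable_norm_rpow_iff hf (by simpa using hp) ENNReal.ofReal_ne_top,
    ENNReal.toReal_ofReal hp.le]
  refine hint.congr ?_
  filter_upwards [hf_nonneg] with x hx
  rw [Real.norm_of_nonneg hx]

theorem average_mul_le_average_rpow_mul_average_rpow {p q : ℝ} (hpq : p.HolderConjugate q)
    {f g : α → ℝ} (hf_nonneg : 0 ≤ᵐ[μ] f) (hg_nonneg : 0 ≤ᵐ[μ] g)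
    (hf : MemLp f (ENNReal.ofReal p) μ) (hg : MemLp g (ENNReal.ofReal q) μ) :
    ⨍ x, f x * g x ∂μ ≤ (⨍ x, f x ^ p ∂μ) ^ (1 / p) * (⨍ x, g x ^ q ∂μ) ^ (1 / q) := by
  have ha : 0 ≤ (μ.real univ)⁻¹ := by positivity
  have hsplit : (μ.real univ)⁻¹ = (μ.real univ)⁻¹ ^ (1 / p) * (μ.real univ)⁻¹ ^ (1 / q) := by
    rw [← Real.rpow_add' ha (by simp [hpq.inv_add_inv_eq_one]), one_div, one_div,
      hpq.inv_add_inv_eq_one, Real.rpow_one]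
  have hfp : 0 ≤ ∫ x, f x ^ p ∂μ :=
    integral_nonneg_of_ae (by filter_upwards [hf_nonneg] with x hx using Real.rpow_nonneg hx _)
  have hgq : 0 ≤ ∫ x, g x ^ q ∂μ :=
    integral_nonneg_of_ae (by filter_upwards [hg_nonneg] with x hx using Real.rpow_nonneg hx _)
  simp only [average_eq, smul_eq_mul]
  calc (μ.real univ)⁻¹ * ∫ x, f x * g x ∂μ
      ≤ (μ.real univ)⁻¹ * ((∫ x, f x ^ p ∂μ) ^ (1 / p) * (∫ x, g x ^ q ∂μ) ^ (1 / q)) :=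
        mul_le_mul_of_nonneg_left
          (integral_mul_le_Lp_mul_Lq_of_nonneg hpq hf_nonneg hg_nonneg hf hg) ha
    _ = _ := by rw [Real.mul_rpow ha hfp, Real.mul_rpow ha hgq, mul_mul_mul_comm, ← hsplit]

theorem integral_mul_le_of_average_rpow_le [IsFiniteMeasure μ] {p q A K : ℝ}
    (hpq : p.HolderConjugate q) {f w : α → ℝ} (hf_nonneg : 0 ≤ᵐ[μ] f) (hw_nonneg : 0 ≤ᵐ[μ] w)
    (hf : MemLp f (ENNReal.ofReal p) μ) (hw : MemLp w (ENNReal.ofReal q) μ)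
    (hfA : (⨍ x, f x ^ p ∂μ) ^ (1 / p) ≤ A) (hwK : (⨍ x, w x ^ q ∂μ) ^ (1 / q) ≤ K * ⨍ x, w x ∂μ) :
    ∫ x, f x * w x ∂μ ≤ A * K * ∫ x, w x ∂μ := by
  have hfp : 0 ≤ (⨍ x, f x ^ p ∂μ) ^ (1 / p) := Real.rpow_nonneg (integral_nonneg_of_ae
    (Measure.ae_smul_measure (hf_nonneg.mono fun _ hx => Real.rpow_nonneg hx _) _)) _
  have hwq : 0 ≤ (⨍ x, w x ^ q ∂μ) ^ (1 / q) := Real.rpow_nonneg (integral_nonneg_of_ae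
    (Measure.ae_smul_measure (hw_nonneg.mono fun _ hx => Real.rpow_nonneg hx _) _)) _
  have havg : ⨍ x, f x * w x ∂μ ≤ A * (K * ⨍ x, w x ∂μ) :=
    (average_mul_le_average_rpow_mul_average_rpow hpq hf_nonneg hw_nonneg hf hw).trans
      (mul_le_mul hfA hwK hwq (hfp.trans hfA))
  rw [← measure_smul_average μ (fun x => f x * w x), ← measure_smul_average μ w, smul_eq_mul,
    smul_eq_mul]
  calc μ.real univ * ⨍ x, f x * w x ∂μ ≤ μ.real univ * (A * (K * ⨍ x, w x ∂μ)) :=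
        mul_le_mul_of_nonneg_left havg measureReal_nonneg
    _ = A * K * (μ.real univ * ⨍ x, w x ∂μ) := by ring

theorem setIntegral_withDensity_ofReal {E : Type*} [NormedAddCommGroup E] [NormedSpace ℝ E]
    {w : α → ℝ} (hw : Measurable w) (hw_nonneg : ∀ x, 0 ≤ w x) (g : α → E) {s : Set α}
    (hs : MeasurableSet s) :
    ∫ x in s, g x ∂μ.withDensity (fun x => ENNReal.ofReal (w x)) = ∫ x in s, w x • g x ∂μ := by
  rw [setIntegral_withDensity_eq_setIntegral_toReal_smul hw.ennreal_ofReal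
    (ae_of_all _ fun _ => ENNReal.ofReal_lt_top) g hs]
  simp only [ENNReal.toReal_ofReal (hw_nonneg _)]

end MeasureTheory

theorem log_density_bmo_transfer_general {X : Type*} [MeasurableSpace X]
    (μ ν : Measure X) [IsFiniteMeasure ν]
    (w : X → ℝ) (hwpos : ∀ x, 0 < w x) (hwm : Measurable w)
    (hμν : μ = ν.withDensity (fun x => ENNReal.ofReal (w x)))
    (p p' C N : ℝ) (hp : 1 < p) (hpp' : 1 / p + 1 / p' = 1)
    (hC : 0 < C) :
    ∃ C' : ℝ, 0 < C' ∧ ∀ B : Set X, MeasurableSet B →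
      0 < (ν B).toReal → 0 < (μ B).toReal →
      IntegrableOn (fun x => Real.log (w x)) B ν →
      IntegrableOn
        (fun x => |Real.log (w x) - (ν B).toReal⁻¹ * ∫ y in B, Real.log (w y) ∂ν| ^ p) B ν →
      IntegrableOn (fun x => w x ^ p') B ν →
      -- John--Nirenberg type bound for log(dμ/dν) in L^p(ν) on B
      ((ν B).toReal⁻¹ *
          ∫ x in B, |Real.log (w x) - (ν B).toReal⁻¹ * ∫ y in B, Real.log (w y) ∂ν| ^ p ∂ν)
            ^ (1 / p) ≤ C * N →
      -- reverse Hölder bound: dμ/dν ∈ B_{p'}(ν)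
      ((ν B).toReal⁻¹ * ∫ x in B, w x ^ p' ∂ν) ^ (1 / p')
          ≤ C * ((ν B).toReal⁻¹ * ∫ x in B, w x ∂ν) →
      (μ B).toReal⁻¹ *
          ∫ x in B, |(-Real.log (w x)) + (ν B).toReal⁻¹ * ∫ y in B, Real.log (w y) ∂ν| ∂μ
        ≤ C' * N := by
  have hpq : p.HolderConjugate p' :=
    Real.holderConjugate_iff.mpr ⟨hp, by simpa only [one_div] using hpp'⟩
  have hw_nonneg : ∀ x, 0 ≤ w x := fun x => (hwpos x).le
  refine ⟨C ^ 2, by positivity, fun B hB _ hμB _ hf_int hw_int hJN hRH => ?_⟩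
  set c := (ν B).toReal⁻¹ * ∫ y in B, Real.log (w y) ∂ν
  have hμ_int :
      ∫ x in B, |-Real.log (w x) + c| ∂μ = ∫ x in B, |Real.log (w x) - c| * w x ∂ν := by
    simp only [hμν, setIntegral_withDensity_ofReal hwm hw_nonneg _ hB, smul_eq_mul,
      neg_add_eq_sub, abs_sub_comm c, mul_comm (w _)]
  have hμ_B : (μ B).toReal = ∫ x in B, w x ∂ν :=
    calc (μ B).toReal = ∫ _ in B, (1 : ℝ) ∂μ := by simp [measureReal_def]
      _ = ∫ x in B, w x ∂ν := by
        simp only [hμν, setIntegral_withDensity_ofReal hwm hw_nonneg _ hB, smul_eq_mul, mul_one]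
  have hf_memLp : MemLp (fun x => |Real.log (w x) - c|) (ENNReal.ofReal p) (ν.restrict B) :=
    memLp_ofReal_of_integrable_rpow hpq.pos (ae_of_all _ fun _ => abs_nonneg _)
      (hwm.log.sub_const c).abs.aestronglyMeasurable hf_int
  have hw_memLp : MemLp w (ENNReal.ofReal p') (ν.restrict B) :=
    memLp_ofReal_of_integrable_rpow hpq.symm.pos (ae_of_all _ hw_nonneg)
      hwm.aestronglyMeasurable hw_int
  have hweighted := integral_mul_le_of_average_rpow_le hpq (ae_of_all _ fun _ => abs_nonneg _)
    (ae_of_all _ hw_nonneg) hf_memLp hw_memLp (A := C * N) (K := C)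
    (by rwa [setAverage_eq]) (by rwa [setAverage_eq, setAverage_eq])
  rw [hμ_B] at hμB
  rw [hμ_int, hμ_B]
  calc _ ≤ (∫ x in B, w x ∂ν)⁻¹ * (C * N * C * ∫ x in B, w x ∂ν) :=
        mul_le_mul_of_nonneg_left hweighted (inv_pos.2 hμB).le
    _ = C ^ 2 * N := by field_simp [hμB.ne']

theorem log_density_bmo_transfer {X : Type*} [MetricSpace X] [MeasurableSpace X] [BorelSpace X]
    (μ ν : Measure X) [IsFiniteMeasure μ] [IsFiniteMeasure ν]
    (w : X → ℝ) (hwpos : ∀ x, 0 < w x) (hwm : Measurable w)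
    (hμν : μ = ν.withDensity (fun x => ENNReal.ofReal (w x)))
    (p p' C N : ℝ) (hp : 1 < p) (hp' : 1 < p') (hpp' : 1 / p + 1 / p' = 1)
    (hC : 0 < C) (hN : 0 ≤ N) :
    ∃ C' : ℝ, 0 < C' ∧ ∀ B : Set X, MeasurableSet B →
      0 < (ν B).toReal → 0 < (μ B).toReal →
      IntegrableOn (fun x => Real.log (w x)) B ν →
      IntegrableOn
        (fun x => |Real.log (w x) - (ν B).toReal⁻¹ * ∫ y in B, Real.log (w y) ∂ν| ^ p) B ν →
      IntegrableOn (fun x => w x ^ p') B ν →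
      -- John--Nirenberg type bound for log(dμ/dν) in L^p(ν) on B
      ((ν B).toReal⁻¹ *
          ∫ x in B, |Real.log (w x) - (ν B).toReal⁻¹ * ∫ y in B, Real.log (w y) ∂ν| ^ p ∂ν)
            ^ (1 / p) ≤ C * N →
      -- reverse Hölder bound: dμ/dν ∈ B_{p'}(ν)
      ((ν B).toReal⁻¹ * ∫ x in B, w x ^ p' ∂ν) ^ (1 / p')
          ≤ C * ((ν B).toReal⁻¹ * ∫ x in B, w x ∂ν) →
      (μ B).toReal⁻¹ *
          ∫ x in B, |(-Real.log (w x)) + (ν B).toReal⁻¹ * ∫ y in B, Real.log (w y) ∂ν| ∂μ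
        ≤ C' * N :=
  log_density_bmo_transfer_general μ ν w hwpos hwm hμν p p' C N hp hpp' hC
end

section
/- Let σ, ω_b, ω_s be finite measures on a set B with σ(B), ω_s(B) > 0, suppose ω_b ≪ σ ≪ ω_s, and suppose the reverse Hölder inequalities: (1/σ(B)) ∫_B (dω_b/dσ)^4 dσ ≤ (1+ε)(ω_b(B)/σ(B))^4 and (1/ω_s(B)) ∫_B (dσ/dω_s)^3 dω_s ≤ (1+ε)(σ(B)/ω_s(B))^3. Then (1/ω_s(B)) ∫_B (dω_b/dω_s)^2 dω_s ≤ (1+ε)(ω_b(B)/ω_s(B))^2. -/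
/-! With `dω_b/dω_s = f g`, Cauchy–Schwarz for the weight `g` gives
`(∫_B (f g)²)² ≤ (∫_B f⁴ g) (∫_B g³)`. The two reverse Hölder inequalities bound the factors by
`(1 + ε) A⁴ / S³` and `(1 + ε) S³ / W²`, where `A = ω_b(B)`, `S = σ(B)`, `W = ω_s(B)`; the powers
of `S` cancel and leave `((1 + ε) A² / W)²`. -/

open MeasureTheory

section WeightedCauchySchwarz

variable {α : Type*} [MeasurableSpace α] {μ : Measure α} {u v w : α → ℝ}

theorem integrable_mul_mul_of_integrable_sq_mul (hw : 0 ≤ᵐ[μ] w)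
    (huvw : AEStronglyMeasurable (fun x => u x * v x * w x) μ)
    (hu : Integrable (fun x => u x ^ 2 * w x) μ) (hv : Integrable (fun x => v x ^ 2 * w x) μ) :
    Integrable (fun x => u x * v x * w x) μ := by
  refine (hu.fun_add hv).mono' huvw ?_
  filter_upwards [hw] with x (hwx : 0 ≤ w x)
  rw [Real.norm_eq_abs, abs_mul, abs_mul, abs_of_nonneg hwx]
  have h2uv := two_mul_le_add_sq |u x| |v x|
  rw [sq_abs, sq_abs] at h2uv
  nlinarith [mul_le_mul_of_nonneg_right h2uv hwx, abs_nonneg (u x), abs_nonneg (v x)]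

theorem sq_integral_mul_mul_le (hw : 0 ≤ᵐ[μ] w)
    (huvw : AEStronglyMeasurable (fun x => u x * v x * w x) μ)
    (hu : Integrable (fun x => u x ^ 2 * w x) μ) (hv : Integrable (fun x => v x ^ 2 * w x) μ) :
    (∫ x, u x * v x * w x ∂μ) ^ 2 ≤ (∫ x, u x ^ 2 * w x ∂μ) * ∫ x, v x ^ 2 * w x ∂μ := by
  have huv := integrable_mul_mul_of_integrable_sq_mul hw huvw hu hv
  -- `t ↦ ∫ (t u - v)² w` is a nonnegative quadratic polynomial, so its discriminant is `≤ 0`.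
  have hquad : ∀ t : ℝ, 0 ≤ (∫ x, u x ^ 2 * w x ∂μ) * (t * t)
      + (-2 * ∫ x, u x * v x * w x ∂μ) * t + ∫ x, v x ^ 2 * w x ∂μ := by
    intro t
    have hexpand : ∫ x, (t * u x - v x) ^ 2 * w x ∂μ = ∫ x, (t * t) * (u x ^ 2 * w x)
        + (-2 * t) * (u x * v x * w x) + v x ^ 2 * w x ∂μ :=
      integral_congr_ae (ae_of_all _ fun x => by ring)
    rw [integral_add ((hu.const_mul _).fun_add (huv.const_mul _)) hv,
      integral_add (hu.const_mul _) (huv.const_mul _), integral_const_mul,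
      integral_const_mul] at hexpand
    have hnonneg : 0 ≤ ∫ x, (t * u x - v x) ^ 2 * w x ∂μ :=
      integral_nonneg_of_ae (by filter_upwards [hw] with x (hwx : 0 ≤ w x) using by positivity)
    linarith
  have hdisc := discrim_le_zero hquad
  rw [discrim] at hdisc
  linarith

end WeightedCauchySchwarz

theorem reverse_holder_composition_general {α : Type*} [MeasurableSpace α]
    (ωs : Measure α)
    (B : Set α)
    (f g : α → ℝ) (hg : ∀ x, 0 ≤ g x)
    (ε : ℝ) (hε : 0 ≤ ε)
    (hωsB : 0 < (ωs B).toReal)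
    (hσB : 0 < ∫ x in B, g x ∂ωs)
    (hint1 : IntegrableOn (fun x => f x ^ 4 * g x) B ωs)
    (hint2 : IntegrableOn (fun x => g x ^ 3) B ωs)
    (hint3 : IntegrableOn (fun x => (f x * g x) ^ 2) B ωs)
    (hRH1 : (∫ x in B, g x ∂ωs)⁻¹ * ∫ x in B, f x ^ 4 * g x ∂ωs
        ≤ (1 + ε) * ((∫ x in B, f x * g x ∂ωs) / ∫ x in B, g x ∂ωs) ^ 4)
    (hRH2 : (ωs B).toReal⁻¹ * ∫ x in B, g x ^ 3 ∂ωs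
        ≤ (1 + ε) * ((∫ x in B, g x ∂ωs) / (ωs B).toReal) ^ 3) :
    (ωs B).toReal⁻¹ * ∫ x in B, (f x * g x) ^ 2 ∂ωs
      ≤ (1 + ε) * ((∫ x in B, f x * g x ∂ωs) / (ωs B).toReal) ^ 2 := by
  have hCS : (∫ x in B, (f x * g x) ^ 2 ∂ωs) ^ 2
      ≤ (∫ x in B, f x ^ 4 * g x ∂ωs) * ∫ x in B, g x ^ 3 ∂ωs := by
    have h := sq_integral_mul_mul_le (μ := ωs.restrict B) (u := fun x => f x ^ 2) (v := g)
      (ae_of_all _ hg)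
      (hint3.aestronglyMeasurable.congr (ae_of_all _ fun x => by ring))
      (hint1.congr (ae_of_all _ fun x => by ring)) (hint2.congr (ae_of_all _ fun x => by ring))
    convert h using 3 <;> (ext x; ring)
  set A := ∫ x in B, f x * g x ∂ωs
  set S := ∫ x in B, g x ∂ωs
  set W := (ωs B).toReal
  have hP : ∫ x in B, f x ^ 4 * g x ∂ωs ≤ S * ((1 + ε) * (A / S) ^ 4) :=
    (inv_mul_le_iff₀ hσB).1 hRH1
  have hQ : ∫ x in B, g x ^ 3 ∂ωs ≤ W * ((1 + ε) * (S / W) ^ 3) :=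
    (inv_mul_le_iff₀ hωsB).1 hRH2
  rw [inv_mul_le_iff₀ hωsB]
  refine le_of_pow_le_pow_left₀ two_ne_zero (by positivity) ?_
  calc (∫ x in B, (f x * g x) ^ 2 ∂ωs) ^ 2
      ≤ (∫ x in B, f x ^ 4 * g x ∂ωs) * ∫ x in B, g x ^ 3 ∂ωs := hCS
    _ ≤ S * ((1 + ε) * (A / S) ^ 4) * (W * ((1 + ε) * (S / W) ^ 3)) :=
      mul_le_mul hP hQ (integral_nonneg fun x => pow_nonneg (hg x) 3) (by positivity)
    _ = (W * ((1 + ε) * (A / W) ^ 2)) ^ 2 := by field_simp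

/-- Here `g = dσ/dω_s` and `f = dω_b/dσ`, so that `σ(B) = ∫_B g dω_s`,
`ω_b(B) = ∫_B f·g dω_s`, and `dω_b/dω_s = f·g`. -/
theorem reverse_holder_composition {α : Type*} [MeasurableSpace α]
    (ωs : Measure α) [IsFiniteMeasure ωs]
    (B : Set α) (hB : MeasurableSet B)
    (f g : α → ℝ) (hf : ∀ x, 0 ≤ f x) (hg : ∀ x, 0 ≤ g x)
    (hfm : Measurable f) (hgm : Measurable g)
    (ε : ℝ) (hε : 0 ≤ ε)
    (hωsB : 0 < (ωs B).toReal)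
    (hσB : 0 < ∫ x in B, g x ∂ωs)
    (hint1 : IntegrableOn (fun x => f x ^ 4 * g x) B ωs)
    (hint2 : IntegrableOn (fun x => g x ^ 3) B ωs)
    (hint3 : IntegrableOn (fun x => (f x * g x) ^ 2) B ωs)
    (hint4 : IntegrableOn (fun x => f x * g x) B ωs)
    (hint5 : IntegrableOn g B ωs)
    (hRH1 : (∫ x in B, g x ∂ωs)⁻¹ * ∫ x in B, f x ^ 4 * g x ∂ωs
        ≤ (1 + ε) * ((∫ x in B, f x * g x ∂ωs) / ∫ x in B, g x ∂ωs) ^ 4)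
    (hRH2 : (ωs B).toReal⁻¹ * ∫ x in B, g x ^ 3 ∂ωs
        ≤ (1 + ε) * ((∫ x in B, g x ∂ωs) / (ωs B).toReal) ^ 3) :
    (ωs B).toReal⁻¹ * ∫ x in B, (f x * g x) ^ 2 ∂ωs
      ≤ (1 + ε) * ((∫ x in B, f x * g x ∂ωs) / (ωs B).toReal) ^ 2 :=
  reverse_holder_composition_general ωs B f g hg ε hε hωsB hσB hint1 hint2 hint3 hRH1 hRH2
end
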